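/- The tensor product over R of two Azumaya R-algebras is again an Azumaya R-algebra. -/

import Mathlib

open TensorProduct in
/-- The canonical map `A ⊗[R] Aᵐᵒᵖ →ₗ[R] Module.End R A`, sending `a ⊗ b` to
`x ↦ a * x * b.unop`. -/
noncomputable def mulLeftRight (R A : Type*) [CommRing R] [Ring A] [Algebra R A] :
    A ⊗[R] Aᵐᵒᵖ →ₗ[R] Module.End R A :=
  TensorProduct.lift <|
    LinearMap.mk₂ R
      (fun a b => (LinearMap.mulRight R b.unop) ∘ₗ (LinearMap.mulLeft R a))
      (fun a a' b => by ext x; simp [add_mul, mul_add])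
      (fun r a b => by ext x; simp [smul_mul_assoc, mul_smul_comm])
      (fun a b b' => by ext x; simp [add_mul, mul_add])
      (fun r a b => by ext x; simp [smul_mul_assoc, mul_smul_comm])

/-- An `R`-algebra `A` is *Azumaya* if it is a finitely generated projective faithful
`R`-module and the canonical map `A ⊗[R] Aᵐᵒᵖ → Module.End R A`,
`a ⊗ b ↦ (x ↦ a * x * b)`, is bijective. -/
def IsAzumayaDef (R A : Type*) [CommRing R] [Ring A] [Algebra R A] : Prop :=
  Module.Finite R A ∧ Module.Projective R A ∧ FaithfulSMul R A ∧
    Function.Bijective (mulLeftRight R A)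

/-! Under `(A ⊗ B) ⊗ (A ⊗ B)ᵐᵒᵖ ≅ (A ⊗ Aᵐᵒᵖ) ⊗ (B ⊗ Bᵐᵒᵖ)`, the canonical map of `A ⊗ B` becomes
the tensor product of the canonical maps of `A` and `B`, followed by
`End A ⊗ End B → End (A ⊗ B)`, which is bijective for finite projective modules.
For faithfulness, Nakayama's lemma shows that the trace ideal of the finite projective faithful
module `B` is all of `R`; as `B` is an algebra this gives `ψ : B → R` with `ψ 1 = 1`, so `a ↦ a ⊗ 1`
embeds `A` into `A ⊗ B` as a direct summand. -/

open TensorProduct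

theorem mulLeftRight_eq_algHom_mulLeftRight (R A : Type*) [CommRing R] [Ring A] [Algebra R A] :
    mulLeftRight R A = (AlgHom.mulLeftRight R A).toLinearMap :=
  TensorProduct.ext' fun _ _ => LinearMap.ext fun _ => by simp [mulLeftRight]

theorem isAzumayaDef_iff_isAzumaya (R A : Type*) [CommRing R] [Ring A] [Algebra R A] :
    IsAzumayaDef R A ↔ IsAzumaya R A := by
  rw [IsAzumayaDef, mulLeftRight_eq_algHom_mulLeftRight]
  exact ⟨fun ⟨_, _, _, h⟩ => ⟨h⟩, fun h => ⟨h.toFinite, h.toProjective, h.toFaithfulSMul, h.bij⟩⟩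

section Faithful

variable {R : Type*} [CommRing R]

theorem exists_dual_apply_one_eq_one (B : Type*) [Ring B] [Algebra R B] [Module.Finite R B]
    [Module.Projective R B] [FaithfulSMul R B] : ∃ ψ : Module.Dual R B, ψ 1 = 1 := by
  let I : Ideal R := LinearMap.range (LinearMap.applyₗ (R := R) (M₂ := R) (1 : B))
  have apply_mem (φ : Module.Dual R B) (b : B) : φ b ∈ I :=
    ⟨φ ∘ₗ LinearMap.mulRight R b, by simp⟩
  have top_le_smul : (⊤ : Submodule R B) ≤ I • ⊤ := by
    obtain ⟨s, hs⟩ := Module.projective_def'.1 ‹Module.Projective R B›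
    intro b _
    rw [← LinearMap.id_apply (R := R) b, ← hs, LinearMap.comp_apply,
      Finsupp.linearCombination_apply]
    exact Submodule.sum_mem _ fun c _ =>
      Submodule.smul_mem_smul (apply_mem (Finsupp.lapply c ∘ₗ s) b) trivial
  obtain ⟨r, hr, hrB⟩ := Submodule.exists_sub_one_mem_and_smul_eq_zero_of_fg_of_le_smul I ⊤
    Module.Finite.fg_top top_le_smul
  have hr0 : r = 0 := FaithfulSMul.eq_of_smul_eq_smul (α := B) fun b => by
    rw [hrB b trivial, zero_smul]
  have one_mem : (1 : R) ∈ I := by simpa [hr0] using I.neg_mem hr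
  obtain ⟨ψ, hψ⟩ := LinearMap.mem_range.1 one_mem
  exact ⟨ψ, hψ⟩

theorem faithfulSMul_tensorProduct_of_dual_apply_eq_one {M N : Type*}
    [AddCommGroup M] [Module R M] [FaithfulSMul R M] [AddCommGroup N] [Module R N]
    {ψ : Module.Dual R N} {n : N} (hψ : ψ n = 1) : FaithfulSMul R (M ⊗[R] N) where
  eq_of_smul_eq_smul {r s} h := FaithfulSMul.eq_of_smul_eq_smul (α := M) fun m => by
    simpa [hψ] using congr_arg (fun x => TensorProduct.rid R M (ψ.lTensor M x)) (h (m ⊗ₜ n))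

end Faithful

namespace AlgHom

variable (R A B : Type*) [CommSemiring R] [Ring A] [Algebra R A] [Ring B] [Algebra R B]

theorem mulLeftRight_tensorProduct_comp_lTensor :
    (mulLeftRight R (A ⊗[R] B)).toLinearMap ∘ₗ
        (Algebra.TensorProduct.opAlgEquiv R R A B).toLinearMap.lTensor (A ⊗[R] B) =
      homTensorHomMap (.id R) A B A B ∘ₗ
        map (mulLeftRight R A).toLinearMap (mulLeftRight R B).toLinearMap ∘ₗ
          (tensorTensorTensorComm R A B Aᵐᵒᵖ Bᵐᵒᵖ).toLinearMap := by
  ext a b a' b' x y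
  simp

theorem bijective_mulLeftRight_tensorProduct [Module.Finite R A] [Module.Projective R A]
    [Module.Finite R B] [Module.Projective R B]
    (hA : Function.Bijective (mulLeftRight R A)) (hB : Function.Bijective (mulLeftRight R B)) :
    Function.Bijective (mulLeftRight R (A ⊗[R] B)) := by
  refine (Function.Bijective.of_comp_iff _
    ((Algebra.TensorProduct.opAlgEquiv R R A B).toLinearEquiv.lTensor (A ⊗[R] B)).bijective).1 ?_
  have h := congr_arg DFunLike.coe (mulLeftRight_tensorProduct_comp_lTensor R A B)
  simp only [LinearMap.coe_comp, ← homTensorHomEquiv_toLinearMap] at h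
  exact h ▸ (homTensorHomEquiv R A B A B).bijective.comp
    ((map_bijective hA hB).comp (tensorTensorTensorComm R A B Aᵐᵒᵖ Bᵐᵒᵖ).bijective)

end AlgHom

instance IsAzumaya.tensorProduct (R A B : Type*) [CommRing R] [Ring A] [Algebra R A] [Ring B]
    [Algebra R B] [IsAzumaya R A] [IsAzumaya R B] : IsAzumaya R (A ⊗[R] B) :=
  have ⟨_, hψ⟩ := exists_dual_apply_one_eq_one (R := R) B
  have := faithfulSMul_tensorProduct_of_dual_apply_eq_one (M := A) hψ
  ⟨AlgHom.bijective_mulLeftRight_tensorProduct R A B IsAzumaya.bij IsAzumaya.bij⟩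

open TensorProduct in
/-- The tensor product over `R` of two Azumaya `R`-algebras is again Azumaya. -/
theorem isAzumaya_tensorProduct (R : Type*) [CommRing R]
    (A B : Type*) [Ring A] [Algebra R A] [Ring B] [Algebra R B]
    (hA : IsAzumayaDef R A) (hB : IsAzumayaDef R B) :
    IsAzumayaDef R (A ⊗[R] B) :=
  have := (isAzumayaDef_iff_isAzumaya R A).1 hA
  have := (isAzumayaDef_iff_isAzumaya R B).1 hB
  (isAzumayaDef_iff_isAzumaya R (A ⊗[R] B)).2 inferInstance
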